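/- The number of full segments of a sequence l = (l_1, ..., l_n) of nonnegative reals is at most 2n - 1. -/

import Mathlib

/-!
Send every full segment to a position at which it attains its minimum. This map is injective:
if two distinct full segments `[i, j]`, `[i', j']` with `i ≤ i'` attain their common minimum `v`
at the same position, then either `[i', j'] ⊊ [i, j]`, or the two overlap and `[i, j']` properly
contains `[i, j]` with minimum still `v`; either way the larger interval witnesses `m ≥ v` for the
smaller one, contradicting fullness. Hence there are at most `n` full segments.
-/

/-- Minimum of the values `l i, ..., l j` (real-valued sequence). -/
noncomputable def segMin (l : ℕ → ℝ) (i j : ℕ) : ℝ :=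
  (Finset.Icc i j).fold min (l i) l

/-- Neighborhood maximin parameter `m[i,j]`: the maximum of `min(l h, ..., l k)` over
subintervals `[h,k]` of `[1,n]` properly containing `[i,j]`, with value `0` if there
are none (in particular for `[i,j] = [1,n]`). -/
noncomputable def nmaxim (l : ℕ → ℝ) (n i j : ℕ) : ℝ :=
  (((Finset.Icc 1 i) ×ˢ (Finset.Icc j n)).filter (fun p => p ≠ (i, j))).fold max 0
    (fun p => segMin l p.1 p.2)

/-- `[i,j]` is a full segment (island) of the sequence `l` restricted to `[1,n]`. -/
def IsFullSeg (l : ℕ → ℝ) (n i j : ℕ) : Prop :=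
  1 ≤ i ∧ i ≤ j ∧ j ≤ n ∧ nmaxim l n i j < segMin l i j

section SegMin

variable (l : ℕ → ℝ) {i j : ℕ}

lemma segMin_le {k : ℕ} (hk : k ∈ Finset.Icc i j) : segMin l i j ≤ l k :=
  (Finset.fold_min_le _).2 (Or.inr ⟨k, hk, le_rfl⟩)

lemma le_segMin_iff (hij : i ≤ j) {c : ℝ} : c ≤ segMin l i j ↔ ∀ k ∈ Finset.Icc i j, c ≤ l k := by
  rw [segMin, Finset.le_fold_min, and_iff_right_iff_imp]
  exact fun h => h i (Finset.mem_Icc.2 ⟨le_rfl, hij⟩)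

lemma exists_segMin_eq (hij : i ≤ j) : ∃ k ∈ Finset.Icc i j, l k = segMin l i j := by
  obtain ⟨k, hk, hmin⟩ := Finset.exists_min_image (Finset.Icc i j) l
    (Finset.nonempty_Icc.2 hij)
  exact ⟨k, hk, le_antisymm ((le_segMin_iff l hij).2 hmin) (segMin_le l hk)⟩

lemma min_segMin_le_segMin_of_overlap {i' j' : ℕ} (hi : i ≤ i') (hi' : i' ≤ j) (hj : j ≤ j') :
    min (segMin l i j) (segMin l i' j') ≤ segMin l i j' := by
  refine (le_segMin_iff l (hi.trans (hi'.trans hj))).2 fun k hk => ?_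
  rw [Finset.mem_Icc] at hk
  rcases le_total k j with hkj | hjk
  · exact min_le_of_left_le (segMin_le l (Finset.mem_Icc.2 ⟨hk.1, hkj⟩))
  · exact min_le_of_right_le (segMin_le l (Finset.mem_Icc.2 ⟨hi'.trans hjk, hk.2⟩))

end SegMin

section FullSeg

variable {l : ℕ → ℝ} {n i j i' j' : ℕ}

lemma segMin_le_nmaxim {h k : ℕ} (hh : 1 ≤ h) (hi : h ≤ i) (hj : j ≤ k)
    (hk : k ≤ n) (hne : (h, k) ≠ (i, j)) : segMin l h k ≤ nmaxim l n i j := by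
  refine (Finset.le_fold_max _).2 (Or.inr ⟨(h, k), ?_, le_rfl⟩)
  simp only [Finset.mem_filter, Finset.mem_product, Finset.mem_Icc]
  exact ⟨⟨⟨hh, hi⟩, hj, hk⟩, hne⟩

lemma IsFullSeg.segMin_lt {h k : ℕ} (hf : IsFullSeg l n i j) (hh : 1 ≤ h) (hi : h ≤ i)
    (hj : j ≤ k) (hk : k ≤ n) (hne : (h, k) ≠ (i, j)) : segMin l h k < segMin l i j :=
  (segMin_le_nmaxim hh hi hj hk hne).trans_lt hf.2.2.2

lemma IsFullSeg.eq_of_le_of_segMin_eq_at {k : ℕ} (hf : IsFullSeg l n i j)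
    (hf' : IsFullSeg l n i' j') (hii' : i ≤ i') (hk : k ∈ Finset.Icc i j)
    (hk' : k ∈ Finset.Icc i' j') (hv : l k = segMin l i j) (hv' : l k = segMin l i' j') :
    (i, j) = (i', j') := by
  rw [Finset.mem_Icc] at hk hk'
  by_contra hne
  rcases le_or_gt j' j with hj'j | hjj'
  · exact (hf'.segMin_lt hf.1 hii' hj'j hf.2.2.1 hne).ne (hv.symm.trans hv')
  · have hunion := min_segMin_le_segMin_of_overlap l hii' (hk'.1.trans hk.2) hjj'.le
    rw [← hv, ← hv', min_self] at hunion
    have hlt := hf.segMin_lt hf.1 le_rfl hjj'.le hf'.2.2.1 (by simp [hjj'.ne'])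
    linarith

lemma IsFullSeg.eq_of_segMin_eq_at {k : ℕ} (hf : IsFullSeg l n i j)
    (hf' : IsFullSeg l n i' j') (hk : k ∈ Finset.Icc i j) (hk' : k ∈ Finset.Icc i' j')
    (hv : l k = segMin l i j) (hv' : l k = segMin l i' j') : (i, j) = (i', j') := by
  rcases le_total i i' with h | h
  · exact hf.eq_of_le_of_segMin_eq_at hf' h hk hk' hv hv'
  · exact (hf'.eq_of_le_of_segMin_eq_at hf h hk' hk hv' hv).symm

theorem ncard_fullSeg_le (l : ℕ → ℝ) (n : ℕ) :
    {p : ℕ × ℕ | IsFullSeg l n p.1 p.2}.ncard ≤ n := by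
  choose! pos hpos hposv using
    fun (p : ℕ × ℕ) (hp : IsFullSeg l n p.1 p.2) => exists_segMin_eq l hp.2.1
  calc {p : ℕ × ℕ | IsFullSeg l n p.1 p.2}.ncard
      ≤ (Finset.Icc 1 n : Set ℕ).ncard := by
        refine Set.ncard_le_ncard_of_injOn pos (fun p hp => ?_) (fun p hp q hq hpq => ?_)
          (Finset.Icc 1 n).finite_toSet
        · have hmem := Finset.mem_Icc.1 (hpos p hp)
          exact Finset.mem_coe.2 (Finset.mem_Icc.2 ⟨hp.1.trans hmem.1, hmem.2.trans hp.2.2.1⟩)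
        · refine IsFullSeg.eq_of_segMin_eq_at hp hq (hpos p hp) ?_ (hposv p hp) ?_
          · exact hpq ▸ hpos q hq
          · exact hpq ▸ hposv q hq
    _ = n := by simp

end FullSeg

theorem card_full_segments_le_general (l : ℕ → ℝ) (n : ℕ) :
    {p : ℕ × ℕ | IsFullSeg l n p.1 p.2}.ncard ≤ 2 * n - 1 := by
  have := ncard_fullSeg_le l n
  omega

/-- A sequence of `n` nonnegative reals has at most `2n - 1` full segments. -/
theorem card_full_segments_le (l : ℕ → ℝ) (n : ℕ)
    (hnonneg : ∀ k ∈ Finset.Icc 1 n, 0 ≤ l k) :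
    {p : ℕ × ℕ | IsFullSeg l n p.1 p.2}.ncard ≤ 2 * n - 1 :=
  card_full_segments_le_general l n
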